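/- Let N ≥ 2 be an integer, r > 0 and h ≠ 0. Define X₀(s,t) = 0 and X_j(s,t) = r·e^{−2i(1/h² − (N+1)/r²) t}·e^{i s/h}·e^{2πi(j−1)/N} for j = 1,…,N. Then X_j(s,t) ≠ X_k(s,t) for all 0 ≤ j < k ≤ N, and the family (X₀, X₁,…,X_N) solves the Klein–Majda–Damodaran system of N+1 filaments with all circulations κ_j = 2 (j = 0,…,N) and all α_j = 1: for each j = 0,1,…,N, ∂_t X_j = 2i ∂_s² X_j + 2i Σ_{k≠j, 0≤k≤N} 2 (X_j − X_k)/|X_j − X_k|². In particular the central straight filament X₀ ≡ 0 is stationary because Σ_{k=1}^N X_k = 0. -/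

import Mathlib

/-
Every filament is `X_j = v_j · E(s, t)`, where `v` is the regular `N`-gon `r ζ^i`
(`ζ = e^{2πi/N}`) together with its center `0`, and `E` is a common unimodular phase, an
eigenfunction of `∂_t` and `∂_s`. Since `E` factors out of
`(X_j - X_k)/|X_j - X_k|² = 1/conj(X_j - X_k)`, the PDE reduces to the stationary identity
`∑_{k ≠ j} 2 (v_j - v_k)/|v_j - v_k|² = (N+1)/r² · v_j`. At a vertex `v_j = r ζ^p` the
center contributes `2 v_j / r²` and, because `conj w = w⁻¹` for roots of unity, the other
vertices contribute `(2/r) ζ^p ∑_{u^N = 1, u ≠ 1} 1/(1 - u)`; pairing `u` with `u⁻¹`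
(`1/(1-u) + 1/(1-u⁻¹) = 1`) gives `∑ 1/(1-u) = (N-1)/2`. At the center the contributions
cancel since the vertices sum to `0`.
-/

open Filter Finset

noncomputable section

/-- The configuration of `N` helices surrounding a central straight filament:
`X₀ ≡ 0` and, for `j = 1, …, N`,
`X_j(s,t) = r e^{−2i(1/h² − (N+1)/r²)t} e^{is/h} e^{2πi(j−1)/N}`. -/
def helixWithCenter (N : ℕ) (r h : ℝ) (j : Fin (N + 1)) (s t : ℝ) : ℂ :=
  if j = 0 then 0
  else
    (r : ℂ)
      * Complex.exp (-2 * Complex.I * (((1 / h ^ 2 - ((N : ℝ) + 1) / r ^ 2 : ℝ)) : ℂ) * (t : ℂ))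
      * Complex.exp (Complex.I * (s : ℂ) / (h : ℂ))
      * Complex.exp (2 * (Real.pi : ℂ) * Complex.I * ((((j : ℕ) : ℝ) - 1 : ℝ) : ℂ) / (N : ℂ))

open Complex Polynomial ComplexConjugate
open scoped Real

lemma Complex.div_sq_norm_eq_inv_conj (x : ℂ) : x / (‖x‖ : ℂ) ^ 2 = (conj x)⁻¹ := by
  rcases eq_or_ne x 0 with rfl | hx
  · simp
  · rw [← mul_conj', div_mul_cancel_left₀ hx]

lemma Complex.mul_div_sq_norm_mul (c x : ℂ) :
    c * x / (‖c * x‖ : ℂ) ^ 2 = (conj c)⁻¹ * (x / (‖x‖ : ℂ) ^ 2) := by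
  simp only [div_sq_norm_eq_inv_conj, map_mul, mul_inv]

lemma inv_one_sub_add_inv_one_sub_inv {K : Type*} [Field K] {u : K} (h0 : u ≠ 0) (h1 : u ≠ 1) :
    (1 - u)⁻¹ + (1 - u⁻¹)⁻¹ = 1 := by
  have h1' : 1 - u ≠ 0 := sub_ne_zero.mpr h1.symm
  field_simp
  ring

theorem IsPrimitiveRoot.sum_nthRootsFinset_one_eq_sum_pow {R M : Type*} [CommRing R] [IsDomain R]
    [AddCommMonoid M] {ζ : R} {n : ℕ} (hζ : IsPrimitiveRoot ζ n) (f : R → M) :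
    ∑ w ∈ nthRootsFinset n (1 : R), f w = ∑ i : Fin n, f (ζ ^ (i : ℕ)) := by
  rcases Nat.eq_zero_or_pos n with rfl | hn
  · simp
  have : NeZero n := ⟨hn.ne'⟩
  symm
  refine Finset.sum_nbij (fun i : Fin n => ζ ^ (i : ℕ)) (fun i _ => ?_) (fun i _ k _ hik => ?_)
    (fun w hw => ?_) (fun _ _ => rfl)
  · rw [Polynomial.mem_nthRootsFinset hn, ← pow_mul, mul_comm, pow_mul, hζ.pow_eq_one, one_pow]
  · exact Fin.ext (hζ.pow_inj i.isLt k.isLt hik)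
  · obtain ⟨i, hi, rfl⟩ :=
      hζ.eq_pow_of_pow_eq_one ((Polynomial.mem_nthRootsFinset hn 1).mp hw)
    exact ⟨⟨i, hi⟩, mem_univ _, rfl⟩

-- The term `u = 1` is the junk value `0⁻¹ = 0`.
lemma two_mul_sum_nthRootsFinset_inv_one_sub {K : Type*} [Field K] {n : ℕ} (hn : 0 < n) :
    2 * ∑ u ∈ nthRootsFinset n (1 : K), (1 - u)⁻¹ = #(nthRootsFinset n (1 : K)) - 1 := by
  classical
  set S := nthRootsFinset n (1 : K)
  have hinv : ∀ u ∈ S, u⁻¹ ∈ S := fun u hu => by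
    rw [mem_nthRootsFinset hn] at hu ⊢
    rw [inv_pow, hu, inv_one]
  have hflip : ∑ u ∈ S, (1 - u)⁻¹ = ∑ u ∈ S, (1 - u⁻¹)⁻¹ :=
    sum_nbij' (·⁻¹) (·⁻¹) hinv hinv (fun u _ => inv_inv u) (fun u _ => inv_inv u)
      fun u _ => by rw [inv_inv]
  have hpair : ∀ u ∈ S.erase 1, (1 - u)⁻¹ + (1 - u⁻¹)⁻¹ = 1 := fun u hu =>
    inv_one_sub_add_inv_one_sub_inv
      (ne_zero_of_mem_nthRootsFinset one_ne_zero (mem_of_mem_erase hu)) (ne_of_mem_erase hu)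
  rw [two_mul]
  nth_rw 2 [hflip]
  rw [← sum_add_distrib, ← sum_erase S (a := 1) (by simp), sum_congr rfl hpair,
    sum_const, nsmul_one, cast_card_erase_of_mem (one_mem_nthRootsFinset hn)]

lemma Complex.two_mul_sum_nthRootsFinset_sub_div_sq_norm {n : ℕ} (hn : 0 < n) {z : ℂ}
    (hz : z ∈ nthRootsFinset n (1 : ℂ)) :
    2 * ∑ w ∈ nthRootsFinset n (1 : ℂ), (z - w) / (‖z - w‖ : ℂ) ^ 2
      = (#(nthRootsFinset n (1 : ℂ)) - 1) * z := by
  set S := nthRootsFinset n (1 : ℂ)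
  have hS : ∀ w ∈ S, w ^ n = 1 := fun w hw => (mem_nthRootsFinset hn 1).mp hw
  have hS0 : ∀ w ∈ S, w ≠ 0 := fun w hw => ne_zero_of_mem_nthRootsFinset one_ne_zero hw
  have hconj : ∀ w ∈ S, conj w = w⁻¹ := fun w hw =>
    (inv_eq_conj (norm_eq_one_of_pow_eq_one (hS w hw) hn.ne')).symm
  have hterm : ∀ w ∈ S, (z - w) / (‖z - w‖ : ℂ) ^ 2 = z * (1 - z * w⁻¹)⁻¹ := by
    intro w hw
    rw [div_sq_norm_eq_inv_conj, map_sub, hconj z hz, hconj w hw,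
      show z⁻¹ - w⁻¹ = z⁻¹ * (1 - z * w⁻¹) by field_simp [hS0 z hz], mul_inv, inv_inv]
  have hrotate : ∀ w ∈ S, z * w⁻¹ ∈ S := fun w hw => by
    rw [mem_nthRootsFinset hn, mul_pow, inv_pow, hS z hz, hS w hw, inv_one, one_mul]
  have hinvol : ∀ w ∈ S, z * (z * w⁻¹)⁻¹ = w := fun w _ => by
    rw [mul_inv, inv_inv, ← mul_assoc, mul_inv_cancel₀ (hS0 z hz), one_mul]
  have hshift : ∑ w ∈ S, (1 - z * w⁻¹)⁻¹ = ∑ u ∈ S, (1 - u)⁻¹ :=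
    sum_nbij' (z * ·⁻¹) (z * ·⁻¹) hrotate hrotate hinvol hinvol (fun _ _ => rfl)
  rw [sum_congr rfl hterm, ← mul_sum, hshift, mul_left_comm,
    two_mul_sum_nthRootsFinset_inv_one_sub hn, mul_comm]

def polygonWithCenter (N : ℕ) (r : ℝ) : Fin (N + 1) → ℂ :=
  Fin.cons 0 fun i => r * exp (2 * π * I / N) ^ (i : ℕ)

section PolygonWithCenter

variable {N : ℕ} {r : ℝ}

@[simp]
lemma polygonWithCenter_zero : polygonWithCenter N r 0 = 0 := rfl

@[simp]
lemma polygonWithCenter_succ (i : Fin N) :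
    polygonWithCenter N r i.succ = r * exp (2 * π * I / N) ^ (i : ℕ) := rfl

lemma polygonWithCenter_injective (hN : N ≠ 0) (hr : r ≠ 0) :
    Function.Injective (polygonWithCenter N r) := by
  have hr' : (r : ℂ) ≠ 0 := ofReal_ne_zero.mpr hr
  refine Fin.cons_injective_of_injective ?_ fun i k hik => ?_
  · rintro ⟨i, hi⟩
    exact mul_ne_zero hr' (pow_ne_zero _ (exp_ne_zero _)) hi
  · exact Fin.ext ((isPrimitiveRoot_exp N hN).pow_inj i.isLt k.isLt (mul_left_cancel₀ hr' hik))

lemma sum_polygonWithCenter (hN : 2 ≤ N) : ∑ k, polygonWithCenter N r k = 0 := by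
  rw [Fin.sum_univ_succ, polygonWithCenter_zero, zero_add]
  simp only [polygonWithCenter_succ, ← mul_sum]
  rw [Fin.sum_univ_eq_sum_range (exp (2 * π * I / N) ^ ·),
    (isPrimitiveRoot_exp N (by omega)).geom_sum_eq_zero (by omega), mul_zero]

lemma two_mul_sum_polygonWithCenter_sub_div_sq_norm (hN : 2 ≤ N) (hr : r ≠ 0)
    (j : Fin (N + 1)) :
    2 * ∑ k ∈ univ.erase j, (polygonWithCenter N r j - polygonWithCenter N r k)
        / (‖polygonWithCenter N r j - polygonWithCenter N r k‖ : ℂ) ^ 2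
      = (N + 1) / r ^ 2 * polygonWithCenter N r j := by
  have hζ : IsPrimitiveRoot (exp (2 * π * I / N)) N := isPrimitiveRoot_exp N (by omega)
  have hconj : conj (exp (2 * π * I / N)) = (exp (2 * π * I / N))⁻¹ :=
    (inv_eq_conj (norm_eq_one_of_pow_eq_one hζ.pow_eq_one (by omega))).symm
  -- the diagonal term is `0 / 0 = 0`
  rw [sum_erase _ (by simp), Fin.sum_univ_succ]
  cases j using Fin.cases with
  | zero =>
    simp only [polygonWithCenter_zero, polygonWithCenter_succ, sub_self, zero_div, zero_sub,
      zero_add, mul_zero, div_sq_norm_eq_inv_conj, map_neg, map_mul, conj_ofReal, map_pow, hconj,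
      inv_pow, inv_neg, mul_inv, inv_inv, sum_neg_distrib, ← mul_sum]
    rw [Fin.sum_univ_eq_sum_range (exp (2 * π * I / N) ^ ·), hζ.geom_sum_eq_zero (by omega)]
    simp
  | succ p =>
    simp only [polygonWithCenter_zero, polygonWithCenter_succ, sub_zero, ← mul_sub,
      mul_div_sq_norm_mul, ← mul_sum]
    set ζ := exp (2 * π * I / N)
    have hζp : ζ ^ (p : ℕ) ∈ nthRootsFinset N (1 : ℂ) := by
      rw [mem_nthRootsFinset (by omega), ← pow_mul, mul_comm, pow_mul, hζ.pow_eq_one, one_pow]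
    have hsum := two_mul_sum_nthRootsFinset_sub_div_sq_norm (by omega) hζp
    rw [hζ.sum_nthRootsFinset_one_eq_sum_pow, hζ.card_nthRootsFinset] at hsum
    rw [div_sq_norm_eq_inv_conj (_ ^ _), map_pow, hconj, inv_pow, inv_inv, conj_ofReal]
    have hr' : (r : ℂ) ≠ 0 := ofReal_ne_zero.mpr hr
    field_simp
    linear_combination hsum

end PolygonWithCenter

lemma hasDerivAt_cexp_mul_ofReal (ω : ℂ) (x : ℝ) :
    HasDerivAt (fun y : ℝ => exp (ω * y)) (ω * exp (ω * x)) x := by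
  simpa [mul_comm] using ((hasDerivAt_id (x : ℂ)).const_mul ω).cexp.comp_ofReal

section HelixWithCenter

variable {N : ℕ} {r h : ℝ}

def helixPhase (N : ℕ) (r h s t : ℝ) : ℂ :=
  exp (I / h * s) * exp (-2 * I * (1 / h ^ 2 - (N + 1) / r ^ 2 : ℝ) * t)

lemma norm_helixPhase (s t : ℝ) : ‖helixPhase N r h s t‖ = 1 := by
  simp [helixPhase, norm_exp, -ofReal_sub, -ofReal_div]

lemma helixWithCenter_eq (j : Fin (N + 1)) (s t : ℝ) :
    helixWithCenter N r h j s t = polygonWithCenter N r j * helixPhase N r h s t := by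
  cases j using Fin.cases with
  | zero => simp [helixWithCenter]
  | succ i =>
    rw [helixWithCenter, if_neg (Fin.succ_ne_zero i), polygonWithCenter_succ, helixPhase,
      ← exp_nat_mul, Fin.val_succ]
    push_cast
    ring_nf

lemma deriv_helixWithCenter_time (j : Fin (N + 1)) (s t : ℝ) :
    deriv (fun τ => helixWithCenter N r h j s τ) t
      = -2 * I * (1 / h ^ 2 - (N + 1) / r ^ 2 : ℝ) * helixWithCenter N r h j s t := by
  simp_rw [helixWithCenter_eq, helixPhase]
  rw [(((hasDerivAt_cexp_mul_ofReal _ t).const_mul _).const_mul _).deriv]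
  ring

lemma deriv_helixWithCenter_space (j : Fin (N + 1)) (s t : ℝ) :
    deriv (fun σ => helixWithCenter N r h j σ t) s = I / h * helixWithCenter N r h j s t := by
  simp_rw [helixWithCenter_eq, helixPhase]
  rw [(((hasDerivAt_cexp_mul_ofReal _ s).mul_const _).const_mul _).deriv]
  ring

lemma deriv_deriv_helixWithCenter_space (j : Fin (N + 1)) (s t : ℝ) :
    deriv (fun σ => deriv (fun σ' => helixWithCenter N r h j σ' t) σ) s
      = (I / h) ^ 2 * helixWithCenter N r h j s t := by
  simp_rw [deriv_helixWithCenter_space, deriv_const_mul_field', deriv_helixWithCenter_space]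
  ring

lemma sum_helixWithCenter_sub_div_sq_norm (hN : 2 ≤ N) (hr : r ≠ 0) (j : Fin (N + 1))
    (s t : ℝ) :
    ∑ k ∈ univ.erase j, (2 : ℂ) * (helixWithCenter N r h j s t - helixWithCenter N r h k s t)
        / (‖helixWithCenter N r h j s t - helixWithCenter N r h k s t‖ : ℂ) ^ 2
      = (N + 1) / r ^ 2 * helixWithCenter N r h j s t := by
  have hE : (conj (helixPhase N r h s t))⁻¹ = helixPhase N r h s t := by
    rw [← inv_eq_conj (norm_helixPhase s t), inv_inv]
  have hterm : ∀ k, (2 : ℂ) * (helixWithCenter N r h j s t - helixWithCenter N r h k s t)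
        / (‖helixWithCenter N r h j s t - helixWithCenter N r h k s t‖ : ℂ) ^ 2
      = helixPhase N r h s t * (2 * ((polygonWithCenter N r j - polygonWithCenter N r k)
        / (‖polygonWithCenter N r j - polygonWithCenter N r k‖ : ℂ) ^ 2)) := fun k => by
    rw [helixWithCenter_eq, helixWithCenter_eq, ← sub_mul, mul_comm _ (helixPhase N r h s t),
      mul_div_assoc, mul_div_sq_norm_mul, hE, mul_left_comm]
  rw [sum_congr rfl fun k _ => hterm k, ← mul_sum, ← mul_sum,
    two_mul_sum_polygonWithCenter_sub_div_sq_norm hN hr, helixWithCenter_eq]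
  ring

end HelixWithCenter

theorem helix_with_center_solves_KMD_general
    (N : ℕ) (hN : 2 ≤ N) (r : ℝ) (hr : 0 < r) (h : ℝ) :
    (∀ (j k : Fin (N + 1)) (s t : ℝ), j ≠ k →
      helixWithCenter N r h j s t ≠ helixWithCenter N r h k s t) ∧
    (∀ (j : Fin (N + 1)) (s t : ℝ),
      deriv (fun τ => helixWithCenter N r h j s τ) t
        = 2 * Complex.I * deriv (fun σ => deriv (fun σ' => helixWithCenter N r h j σ' t) σ) s
          + 2 * Complex.I * ∑ k ∈ Finset.univ.erase j,
              (2 : ℂ) * (helixWithCenter N r h j s t - helixWithCenter N r h k s t)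
                / ((‖helixWithCenter N r h j s t - helixWithCenter N r h k s t‖ : ℝ) : ℂ) ^ 2) ∧
    (∀ s t : ℝ, ∑ k ∈ Finset.univ.erase (0 : Fin (N + 1)), helixWithCenter N r h k s t = 0) := by
  refine ⟨fun j k s t hjk => ?_, fun j s t => ?_, fun s t => ?_⟩
  · have hE : helixPhase N r h s t ≠ 0 := mul_ne_zero (exp_ne_zero _) (exp_ne_zero _)
    rw [helixWithCenter_eq, helixWithCenter_eq, Ne, mul_left_inj' hE]
    exact (polygonWithCenter_injective (by omega) hr.ne').ne hjk
  · rw [deriv_helixWithCenter_time, deriv_deriv_helixWithCenter_space,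
      sum_helixWithCenter_sub_div_sq_norm hN hr.ne']
    push_cast
    linear_combination (-2 * I / h ^ 2 * helixWithCenter N r h j s t) * I_sq
  · simp only [helixWithCenter_eq]
    rw [sum_erase _ (by simp), ← sum_mul, sum_polygonWithCenter hN, zero_mul]

/-- **`N` helices around a central straight filament solve the Klein–Majda–Damodaran
system of `N+1` filaments** with all circulations `κ_j = 2` and all `α_j = 1`:
the filaments are pairwise disjoint, each solves
`∂ₜ X_j = 2i ∂ₛ² X_j + 2i ∑_{k ≠ j} 2 (X_j − X_k)/|X_j − X_k|²`, and in particular the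
central filament is stationary since `∑_{k=1}^N X_k = 0`. -/
theorem helix_with_center_solves_KMD
    (N : ℕ) (hN : 2 ≤ N) (r : ℝ) (hr : 0 < r) (h : ℝ) (hh : h ≠ 0) :
    (∀ (j k : Fin (N + 1)) (s t : ℝ), j ≠ k →
      helixWithCenter N r h j s t ≠ helixWithCenter N r h k s t) ∧
    (∀ (j : Fin (N + 1)) (s t : ℝ),
      deriv (fun τ => helixWithCenter N r h j s τ) t
        = 2 * Complex.I * deriv (fun σ => deriv (fun σ' => helixWithCenter N r h j σ' t) σ) s
          + 2 * Complex.I * ∑ k ∈ Finset.univ.erase j,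
              (2 : ℂ) * (helixWithCenter N r h j s t - helixWithCenter N r h k s t)
                / ((‖helixWithCenter N r h j s t - helixWithCenter N r h k s t‖ : ℝ) : ℂ) ^ 2) ∧
    (∀ s t : ℝ, ∑ k ∈ Finset.univ.erase (0 : Fin (N + 1)), helixWithCenter N r h k s t = 0) :=
  helix_with_center_solves_KMD_general N hN r hr h

end
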